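/- arXiv:1112.4411 — 2 statements merged into one kernel-verified Lean document; each statement's English description precedes it below -/
import Mathlib

section
/- For integers $n \geq m > r \geq 0$, the following product identity holds: $\prod_{i=0}^{m-r-1}\frac{i!\,(n+i)!}{(m-1-i)!\,(n-r+i)!} = \prod_{i=0}^{m-r-1}\frac{\binom{n+m-r-1}{r+i}}{\binom{n+m-r-1}{i}}$. -/
open Finset

/-! Expanding the binomial coefficients, the right-hand factor is `i!` times
`(N - i)! / ((r + i)! (N - r - i)!)` with `N = n + m - r - 1`; reversing the order of the
product of the second factors turns it into the product of `(n + i)! / ((m - 1 - i)! (n - r + i)!)`. -/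

theorem Nat.cast_choose_add_div_cast_choose {N r i : ℕ} (h : r + i ≤ N) :
    ((N.choose (r + i) : ℚ) / N.choose i) =
      i.factorial * ((N - i).factorial / ((r + i).factorial * (N - (r + i)).factorial)) := by
  rw [Nat.cast_choose ℚ h, Nat.cast_choose ℚ (by omega : i ≤ N)]
  field_simp

theorem degree_product_identity_general (n m r : ℕ) (hmn : m ≤ n) :
    ∏ i ∈ range (m - r), ((i.factorial * (n + i).factorial : ℚ) /
        ((m - 1 - i).factorial * (n - r + i).factorial)) =
    ∏ i ∈ range (m - r), (((n + m - r - 1).choose (r + i) : ℚ) /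
        ((n + m - r - 1).choose i)) := by
  set N := n + m - r - 1
  have hchoose : ∀ i ∈ range (m - r), ((N.choose (r + i) : ℚ) / N.choose i) =
      i.factorial * ((N - i).factorial / ((r + i).factorial * (N - (r + i)).factorial)) :=
    fun i hi => Nat.cast_choose_add_div_cast_choose (by rw [mem_range] at hi; omega)
  have hreflect : ∏ i ∈ range (m - r),
      ((N - i).factorial / ((r + i).factorial * (N - (r + i)).factorial) : ℚ) =
      ∏ i ∈ range (m - r), ((n + i).factorial / ((m - 1 - i).factorial * (n - r + i).factorial) : ℚ) := by
    rw [← prod_range_reflect]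
    refine prod_congr rfl fun i hi => ?_
    simp only [mem_range] at hi
    rw [show N - (m - r - 1 - i) = n + i by omega, show r + (m - r - 1 - i) = m - 1 - i by omega,
      show N - (m - 1 - i) = n - r + i by omega]
  rw [prod_congr rfl hchoose, prod_mul_distrib, hreflect, ← prod_mul_distrib]
  refine prod_congr rfl fun i _ => ?_
  ring

theorem degree_product_identity (n m r : ℕ) (hrm : r < m) (hmn : m ≤ n) :
    ∏ i ∈ range (m - r), ((i.factorial * (n + i).factorial : ℚ) /
        ((m - 1 - i).factorial * (n - r + i).factorial)) =
    ∏ i ∈ range (m - r), (((n + m - r - 1).choose (r + i) : ℚ) /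
        ((n + m - r - 1).choose i)) :=
  degree_product_identity_general n m r hmn
end

section
/- Let $D \geq 1$ and let $S(t) = \sum_{i \geq 0} a_i t^i$ be a formal power series with integer coefficients such that $a_0 > 0$. Then $\left[(1-t^D)\,[S(t)]_+\right]_+ = \left[(1-t^D)\,S(t)\right]_+$, where $[\cdot]_+$ denotes truncation of a power series at (just before) its first non-positive coefficient. -/
/-!
Both sides are truncations at the first index `n` with `a n ≤ 0`. Below `n` the series
`[S]₊` and `S` agree, and multiplication by `1 - t^D` only looks backwards, so the two
products agree below `n` too. At `n` both products have a non-positive coefficient,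
`a n - a (n - D)` resp. `0 - a (n - D)`, because `a (n - D)` is either `a n` itself
(when `D = 0`) or a positive earlier coefficient. Hence the truncations coincide.
-/

/-- Truncation of a power series (given by its coefficient sequence) at its
first non-positive coefficient: coefficients before the first index `i₀` with
`a i₀ ≤ 0` are kept, all others are set to `0`. -/
noncomputable def truncPlus (a : ℕ → ℤ) : ℕ → ℤ :=
  fun i => if ∀ j ≤ i, 0 < a j then a i else 0

/-- Coefficient sequence of `(1 - t^D) * S(t)` where `S` has coefficients `a`:
the coefficient of `t^i` is `a i - a (i - D)` (with `a` of negative index `0`). -/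
def mulOneSubPow (D : ℕ) (a : ℕ → ℤ) : ℕ → ℤ :=
  fun i => a i - (if D ≤ i then a (i - D) else 0)

theorem truncPlus_eq_self {a : ℕ → ℤ} (h : ∀ i, 0 < a i) : truncPlus a = a :=
  funext fun _ => if_pos fun j _ => h j

theorem truncPlus_apply_eq_self {a : ℕ → ℤ} {n i : ℕ} (hpos : ∀ j < n, 0 < a j) (hi : i < n) :
    truncPlus a i = a i :=
  if_pos fun j hj => hpos j (hj.trans_lt hi)

theorem truncPlus_apply_eq_zero {a : ℕ → ℤ} {n i : ℕ} (hn : a n ≤ 0) (hi : n ≤ i) :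
    truncPlus a i = 0 :=
  if_neg fun h => (h n hi).not_ge hn

theorem truncPlus_eq_of_eqOn_of_nonpos {f g : ℕ → ℤ} {n : ℕ} (h : ∀ i < n, f i = g i)
    (hf : f n ≤ 0) (hg : g n ≤ 0) : truncPlus f = truncPlus g := by
  funext i
  rcases lt_or_ge i n with hi | hi
  · have hfg : ∀ j ≤ i, f j = g j := fun j hj => h j (hj.trans_lt hi)
    simp only [truncPlus, hfg i le_rfl]
    exact if_congr (forall₂_congr fun j hj => by rw [hfg j hj]) rfl rfl
  · rw [truncPlus_apply_eq_zero hf hi, truncPlus_apply_eq_zero hg hi]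

theorem mulOneSubPow_congr_of_lt {D n i : ℕ} {a b : ℕ → ℤ} (h : ∀ j < n, a j = b j)
    (hi : i < n) : mulOneSubPow D a i = mulOneSubPow D b i := by
  simp only [mulOneSubPow, h i hi]
  split_ifs
  · rw [h (i - D) (by omega)]
  · rfl

theorem mulOneSubPow_nonpos {D n : ℕ} {a : ℕ → ℤ} (hpos : ∀ j < n, 0 < a j) (hn : a n ≤ 0) :
    mulOneSubPow D a n ≤ 0 := by
  simp only [mulOneSubPow]
  split_ifs
  · rcases (Nat.sub_le n D).lt_or_eq with hlt | heq
    · linarith [hpos _ hlt]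
    · rw [heq, sub_self]
  · simpa using hn

theorem truncPlus_mulOneSubPow_general (D : ℕ) (a : ℕ → ℤ) :
    truncPlus (mulOneSubPow D (truncPlus a)) = truncPlus (mulOneSubPow D a) := by
  by_cases H : ∀ i, 0 < a i
  · rw [truncPlus_eq_self H]
  push Not at H
  set n := Nat.find H
  have hn : a n ≤ 0 := Nat.find_spec H
  have hpos : ∀ j < n, 0 < a j := fun j hj => not_le.1 (Nat.find_min H hj)
  have hagree : ∀ j < n, truncPlus a j = a j := fun j hj => truncPlus_apply_eq_self hpos hj
  refine truncPlus_eq_of_eqOn_of_nonpos (n := n)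
    (fun i hi => mulOneSubPow_congr_of_lt hagree hi) (mulOneSubPow_nonpos ?_ ?_)
    (mulOneSubPow_nonpos hpos hn)
  · exact fun j hj => (hagree j hj).symm ▸ hpos j hj
  · exact (truncPlus_apply_eq_zero hn le_rfl).le

theorem truncPlus_mulOneSubPow (D : ℕ) (hD : 1 ≤ D) (a : ℕ → ℤ) (ha : 0 < a 0) :
    truncPlus (mulOneSubPow D (truncPlus a)) = truncPlus (mulOneSubPow D a) :=
  truncPlus_mulOneSubPow_general D a
end
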